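/- Let $\Sigma \subset \mathbb{R}^n$ and suppose at two consecutive dyadic scales we have slab inclusions: $\Sigma \cap (B_{2t} \setminus \overline{B_t}) \subset \{|e_1 \cdot x - b_1| \leq h_1\} \cap \{|e_2 \cdot x - b_2| \leq h_2\}$ with $e_1, e_2 \in \mathbb{S}^{n-1}$, $b_1, b_2 \in \mathbb{R}$, $h_1, h_2 > 0$. Suppose moreover $\Sigma \cap (B_{2t} \setminus \overline{B_t})$ contains, for some $y' \in \mathbb{R}^{n-1}$ with $t < |y'| < 2t$ written in coordinates adapted to $e_1 = e_n$, the graph points $(y, f(y))$ for all $y \in B'_{t/100}(y')$, for some function $f$ with values in $[b_1 - h_1, b_1 + h_1]$. If additionally $|e_2 - e_1| \leq 1/2$, then $t|e_2 - e_1| + |b_2 - b_1| \leq C(h_1 + h_2)$ for a dimensional constant $C = C(n)$. -/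

import Mathlib

open scoped RealInnerProductSpace

/-- Embedding of a graph point `(y, s) ∈ ℝ^m × ℝ` into `ℝ^{m+1}`. -/
noncomputable def embed {m : ℕ} (y : EuclideanSpace ℝ (Fin m)) (s : ℝ) :
    EuclideanSpace ℝ (Fin (m + 1)) :=
  (WithLp.equiv 2 (∀ _ : Fin (m + 1), ℝ)).symm
    (fun i => if h : (i : ℕ) < m then y ⟨i, h⟩ else s)

/-!
Write `e₂ = (w, a)` in the coordinates where `e₁ = e_n`. On the graphical patch both slab
conditions hold at `(y, f y)`, so `⟪w, y⟫ + a f(y)` and `f(y)` both oscillate by `O(h₁ + h₂)`.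
Moving from `y'` a distance `t/200` in the direction of `w` shows `t‖w‖ = O(h₁ + h₂)`; the
closeness `|e₂ - e_n| ≤ 1/2` keeps `a` near `1`, so `|e₂ - e_n|` and `|1 - a|` are `O(‖w‖)`.
Evaluating both slab conditions at the single point `(y', f y')`, with `|y'|, |f y'| < 2t`,
then gives `|b₂ - b₁| ≤ h₁ + h₂ + O(t‖w‖)`.
-/

section Embed

variable {m : ℕ}

lemma embed_castSucc (y : EuclideanSpace ℝ (Fin m)) (s : ℝ) (i : Fin m) :
    embed y s i.castSucc = y i := by
  simp only [embed, WithLp.equiv_symm_apply, PiLp.toLp_apply]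
  rw [dif_pos (by simp)]
  rfl

lemma embed_last (y : EuclideanSpace ℝ (Fin m)) (s : ℝ) :
    embed y s (Fin.last m) = s := by
  simp only [embed, WithLp.equiv_symm_apply, PiLp.toLp_apply]
  rw [dif_neg (by simp)]

lemma exists_embed_eq (x : EuclideanSpace ℝ (Fin (m + 1))) : ∃ y s, embed y s = x := by
  refine ⟨(WithLp.equiv 2 (∀ _ : Fin m, ℝ)).symm (fun i => x i.castSucc), x (Fin.last m), ?_⟩
  ext i
  cases i using Fin.lastCases with
  | last => exact embed_last _ _
  | cast j => rw [embed_castSucc]; rfl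

lemma single_last_eq_embed : EuclideanSpace.single (Fin.last m) (1 : ℝ) = embed 0 1 := by
  ext i
  cases i using Fin.lastCases with
  | last => rw [embed_last]; simp
  | cast j =>
    rw [embed_castSucc]
    simp [(Fin.castSucc_lt_last j).ne]

lemma embed_sub (y z : EuclideanSpace ℝ (Fin m)) (s r : ℝ) :
    embed y s - embed z r = embed (y - z) (s - r) := by
  ext i
  cases i using Fin.lastCases with
  | last => simp [embed_last]
  | cast j => simp [embed_castSucc]

lemma inner_embed_embed (y z : EuclideanSpace ℝ (Fin m)) (s r : ℝ) :
    ⟪embed y s, embed z r⟫ = ⟪y, z⟫ + s * r := by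
  simp only [PiLp.inner_apply, RCLike.inner_apply, conj_trivial, Fin.sum_univ_castSucc,
    embed_castSucc, embed_last]
  ring

lemma norm_embed_sq (y : EuclideanSpace ℝ (Fin m)) (s : ℝ) :
    ‖embed y s‖ ^ 2 = ‖y‖ ^ 2 + s ^ 2 := by
  rw [← real_inner_self_eq_norm_sq, ← real_inner_self_eq_norm_sq, inner_embed_embed]
  ring

lemma abs_le_norm_embed (y : EuclideanSpace ℝ (Fin m)) (s : ℝ) : |s| ≤ ‖embed y s‖ := by
  have h := norm_embed_sq y s
  nlinarith [norm_nonneg (embed y s), norm_nonneg y, abs_nonneg s, sq_abs s]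

end Embed

/- For a unit vector `(w, a)`, `|(w, a) - e_n|² = 2(1 - a)` while `‖w‖² = (1 - a)(1 + a)`;
once `a ≥ 7/8` both `|(w, a) - e_n|` and `1 - a` are controlled by `‖w‖`. -/
lemma norm_embed_sub_embed_zero_one_le {m : ℕ} {w : EuclideanSpace ℝ (Fin m)} {a : ℝ}
    (hunit : ‖embed w a‖ = 1)
    (hclose : ‖embed w a - embed 0 1‖ ≤ 1 / 2) :
    ‖embed w a - embed 0 1‖ ≤ 2 * ‖w‖ ∧ |a - 1| ≤ ‖w‖ := by
  have hsq := norm_embed_sq w a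
  have hdsq := norm_embed_sq (w - 0) (a - 1)
  rw [← embed_sub, sub_zero] at hdsq
  rw [hunit] at hsq
  set d := ‖embed w a - embed 0 1‖
  have hd : 0 ≤ d := norm_nonneg _
  have hw : 0 ≤ ‖w‖ := norm_nonneg _
  have ha : 7 / 8 ≤ a := by nlinarith
  have ha1 : a ≤ 1 := by nlinarith
  refine ⟨?_, ?_⟩
  · nlinarith
  · rw [abs_sub_comm, abs_of_nonneg (by linarith)]
    nlinarith

section Slabs

variable {E : Type*} [NormedAddCommGroup E] [InnerProductSpace ℝ E]

/- Compare the two slab conditions at `y₀` and at `y₀ + ρ w / ‖w‖`: the term `⟪w, ·⟫`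
increases by `ρ ‖w‖`, while every other term moves by at most `2 h₁` or `2 h₂`. -/
lemma mul_norm_le_of_forall_mem_closedBall {w y₀ : E} {f : E → ℝ} {a b₁ b₂ h₁ h₂ ρ : ℝ}
    (hρ : 0 ≤ ρ) (ha : |a| ≤ 1)
    (hf : ∀ y ∈ Metric.closedBall y₀ ρ, |f y - b₁| ≤ h₁)
    (hg : ∀ y ∈ Metric.closedBall y₀ ρ, |⟪w, y⟫ + a * f y - b₂| ≤ h₂) :
    ρ * ‖w‖ ≤ 2 * (h₁ + h₂) := by
  set v : E := (ρ / ‖w‖) • w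
  have hv : ‖v‖ ≤ ρ := by
    rcases eq_or_ne w 0 with rfl | hw
    · simpa [v] using hρ
    · rw [norm_smul, Real.norm_eq_abs, abs_of_nonneg (by positivity),
        div_mul_cancel₀ _ (norm_ne_zero_iff.mpr hw)]
  have hwv : ⟪w, v⟫ = ρ * ‖w‖ := by
    rcases eq_or_ne w 0 with rfl | hw
    · simp [v]
    · rw [real_inner_smul_right, real_inner_self_eq_norm_sq]
      field_simp
  have hy₀ : y₀ ∈ Metric.closedBall y₀ ρ := Metric.mem_closedBall_self hρ
  have hy₁ : y₀ + v ∈ Metric.closedBall y₀ ρ := by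
    rwa [Metric.mem_closedBall, dist_eq_norm, add_sub_cancel_left]
  have hscale : ∀ x : ℝ, |a * x| ≤ |x| := fun x => by
    rw [abs_mul]; exact mul_le_of_le_one_left (abs_nonneg x) ha
  have key : ρ * ‖w‖ = (⟪w, y₀ + v⟫ + a * f (y₀ + v) - b₂) - (⟪w, y₀⟫ + a * f y₀ - b₂)
      - a * (f (y₀ + v) - b₁) + a * (f y₀ - b₁) := by
    rw [inner_add_right, hwv]; ring
  rw [key]
  have hg₁ := hg _ hy₁
  have hg₀ := hg _ hy₀
  have hf₁ := (hscale _).trans (hf _ hy₁)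
  have hf₀ := (hscale _).trans (hf _ hy₀)
  grind [abs_le]

lemma abs_sub_le_of_abs_sub_le_of_abs_inner_add_mul_sub_le {w y : E} {a s b₁ b₂ h₁ h₂ : ℝ}
    (h₁s : |s - b₁| ≤ h₁) (h₂s : |⟪w, y⟫ + a * s - b₂| ≤ h₂) :
    |b₂ - b₁| ≤ h₁ + h₂ + ‖w‖ * ‖y‖ + |a - 1| * |s| := by
  have hwy := abs_real_inner_le_norm w y
  have has : |(a - 1) * s| = |a - 1| * |s| := abs_mul _ _
  have key : b₂ - b₁ = (s - b₁) - (⟪w, y⟫ + a * s - b₂) + ⟪w, y⟫ + (a - 1) * s := by ring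
  rw [key]
  grind [abs_le]

end Slabs

theorem stmt17_general (m : ℕ) :
    ∃ C > 0, ∀ (S : Set (EuclideanSpace ℝ (Fin (m + 1))))
      (e₂ : EuclideanSpace ℝ (Fin (m + 1))) (b₁ b₂ h₁ h₂ t : ℝ),
      0 < t → 0 < h₁ → 0 < h₂ → ‖e₂‖ = 1 →
      ‖e₂ - EuclideanSpace.single (Fin.last m) (1:ℝ)‖ ≤ 1/2 →
      (∀ x ∈ S ∩ (Metric.ball 0 (2*t) \ Metric.closedBall 0 t),
        |⟪EuclideanSpace.single (Fin.last m) (1:ℝ), x⟫ - b₁| ≤ h₁ ∧ |⟪e₂, x⟫ - b₂| ≤ h₂) →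
      (∃ (y' : EuclideanSpace ℝ (Fin m)) (f : EuclideanSpace ℝ (Fin m) → ℝ),
        t < ‖y'‖ ∧ ‖y'‖ < 2*t ∧
        ∀ y ∈ Metric.ball y' (t/100),
          embed y (f y) ∈ S ∩ (Metric.ball 0 (2*t) \ Metric.closedBall 0 t) ∧
          |f y - b₁| ≤ h₁) →
      t * ‖e₂ - EuclideanSpace.single (Fin.last m) (1:ℝ)‖ + |b₂ - b₁| ≤ C * (h₁ + h₂) := by
  refine ⟨2401, by norm_num, ?_⟩
  rintro S e₂ b₁ b₂ h₁ h₂ t ht - - hunit hclose hslab ⟨y', f, -, hy', hgraph⟩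
  obtain ⟨w, a, rfl⟩ := exists_embed_eq e₂
  rw [single_last_eq_embed] at hclose ⊢
  obtain ⟨htilt, ha⟩ := norm_embed_sub_embed_zero_one_le hunit hclose
  have hpatch : ∀ y ∈ Metric.ball y' (t / 100),
      |f y - b₁| ≤ h₁ ∧ |⟪w, y⟫ + a * f y - b₂| ≤ h₂ ∧ |f y| ≤ 2 * t := by
    intro y hy
    obtain ⟨hmem, hf⟩ := hgraph y hy
    have hnorm : ‖embed y (f y)‖ < 2 * t := by simpa using hmem.2.1
    refine ⟨hf, ?_, (abs_le_norm_embed y (f y)).trans hnorm.le⟩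
    simpa [inner_embed_embed, mul_comm] using (hslab _ hmem).2
  have hsub : Metric.closedBall y' (t / 200) ⊆ Metric.ball y' (t / 100) :=
    Metric.closedBall_subset_ball (by linarith)
  have hw : t / 200 * ‖w‖ ≤ 2 * (h₁ + h₂) :=
    mul_norm_le_of_forall_mem_closedBall (by positivity) (hunit ▸ abs_le_norm_embed w a)
      (fun y hy => (hpatch y (hsub hy)).1) (fun y hy => (hpatch y (hsub hy)).2.1)
  obtain ⟨hf₁, hf₂, hf⟩ := hpatch y' (Metric.mem_ball_self (by positivity))
  have hb := abs_sub_le_of_abs_sub_le_of_abs_inner_add_mul_sub_le hf₁ hf₂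
  have := mul_le_mul_of_nonneg_left htilt ht.le
  have := mul_le_mul_of_nonneg_left hy'.le (norm_nonneg w)
  have := mul_le_mul ha hf (abs_nonneg _) (norm_nonneg w)
  linarith

/-- Coefficient comparison (Step 2 of the proof of Theorem 2.2): if a set `Σ ⊆ ℝ^{m+1}`
(`m + 1 = n`) lies, on the annulus `B_{2t} \ B̄_t`, in two slabs of thicknesses `h₁, h₂`
with directions `e₁ = e_n`, `e₂` and offsets `b₁, b₂`, and contains a graphical patch of
radius `t/100` over a base point `y'` with `t < |y'| < 2t` with values in
`[b₁ - h₁, b₁ + h₁]`, and `|e₂ - e₁| ≤ 1/2`, then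
`t|e₂ - e₁| + |b₂ - b₁| ≤ C(h₁ + h₂)` with `C = C(n)`. -/
theorem stmt17 (m : ℕ) (hm : 1 ≤ m) :
    ∃ C > 0, ∀ (S : Set (EuclideanSpace ℝ (Fin (m + 1))))
      (e₂ : EuclideanSpace ℝ (Fin (m + 1))) (b₁ b₂ h₁ h₂ t : ℝ),
      0 < t → 0 < h₁ → 0 < h₂ → ‖e₂‖ = 1 →
      ‖e₂ - EuclideanSpace.single (Fin.last m) (1:ℝ)‖ ≤ 1/2 →
      (∀ x ∈ S ∩ (Metric.ball 0 (2*t) \ Metric.closedBall 0 t),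
        |⟪EuclideanSpace.single (Fin.last m) (1:ℝ), x⟫ - b₁| ≤ h₁ ∧ |⟪e₂, x⟫ - b₂| ≤ h₂) →
      (∃ (y' : EuclideanSpace ℝ (Fin m)) (f : EuclideanSpace ℝ (Fin m) → ℝ),
        t < ‖y'‖ ∧ ‖y'‖ < 2*t ∧
        ∀ y ∈ Metric.ball y' (t/100),
          embed y (f y) ∈ S ∩ (Metric.ball 0 (2*t) \ Metric.closedBall 0 t) ∧
          |f y - b₁| ≤ h₁) →
      t * ‖e₂ - EuclideanSpace.single (Fin.last m) (1:ℝ)‖ + |b₂ - b₁| ≤ C * (h₁ + h₂) :=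
  stmt17_general m
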